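/- Let D be a weighted oriented graph with underlying graph G and edge ideal I(D). Then I(D) = ⋂_{C ∈ Υ(D)} I_C, where Υ(D) is the set of all strong vertex covers of D and, for a strong vertex cover C, I_C is the irreducible monomial ideal generated by the variables in L_1(C) together with the pure powers t_i^{w_i} for t_i ∈ L_2(C) ∪ L_3(C). -/

import Mathlib

open MvPolynomial Pointwise

/-- A weighted oriented graph `D` on vertices `t_1, …, t_s` (indexed by `Fin s`):
a set of directed edges with no loops such that for each unordered pair of vertices at
most one orientation occurs, together with a weight function `w : V(D) → ℕ₊` which
equals `1` on every source vertex (a vertex having only outgoing edges, i.e. no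
incoming edge). -/
structure WOGraph (s : ℕ) where
  E : Set (Fin s × Fin s)
  no_loops : ∀ i : Fin s, (i, i) ∉ E
  no_two_orientations : ∀ i j : Fin s, (i, j) ∈ E → (j, i) ∉ E
  w : Fin s → ℕ
  w_pos : ∀ i, 1 ≤ w i
  source_weight_one : ∀ i : Fin s, (∀ j, (j, i) ∉ E) → w i = 1

/-- A vertex of `D` is a sink if it has only incoming edges. -/
def WOGraph.IsSink {s : ℕ} (D : WOGraph s) (i : Fin s) : Prop := ∀ j, (i, j) ∉ D.E

/-- `V⁺(D)`: the set of vertices of weight greater than `1`. -/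
def WOGraph.Vplus {s : ℕ} (D : WOGraph s) : Set (Fin s) := { i | 1 < D.w i }

/-- The underlying simple graph `G` of `D`, with edges `{t_i, t_j}` for `(t_i,t_j) ∈ E(D)`. -/
def WOGraph.underlying {s : ℕ} (D : WOGraph s) : SimpleGraph (Fin s) :=
  SimpleGraph.fromRel (fun i j => (i, j) ∈ D.E)

/-- The edge ideal `I(D) = (t_i t_j^{w_j} : (t_i, t_j) ∈ E(D))` of `D`
in `S = K[t_1, …, t_s]`. -/
noncomputable def WOGraph.edgeIdeal {s : ℕ} (D : WOGraph s) (K : Type*) [Field K] :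
    Ideal (MvPolynomial (Fin s) K) :=
  Ideal.span { f | ∃ e ∈ D.E, f = X e.1 * X e.2 ^ D.w e.2 }

/-- The neighbor set `N_G(x)` of a vertex in the underlying graph of `D`. -/
def WOGraph.neighbors {s : ℕ} (D : WOGraph s) (x : Fin s) : Set (Fin s) :=
  { y | (x, y) ∈ D.E ∨ (y, x) ∈ D.E }

/-- A vertex cover of the underlying graph of `D`. -/
def WOGraph.IsVertexCover {s : ℕ} (D : WOGraph s) (C : Set (Fin s)) : Prop :=
  ∀ e ∈ D.E, (e : Fin s × Fin s).1 ∈ C ∨ e.2 ∈ C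

/-- `L_1(C) = {x ∈ C : ∃ (x,y) ∈ E(D) with y ∉ C}`. -/
def WOGraph.L1 {s : ℕ} (D : WOGraph s) (C : Set (Fin s)) : Set (Fin s) :=
  { x | x ∈ C ∧ ∃ y, (x, y) ∈ D.E ∧ y ∉ C }

/-- `L_3(C) = {x ∈ C : N_G(x) ⊆ C}`. -/
def WOGraph.L3 {s : ℕ} (D : WOGraph s) (C : Set (Fin s)) : Set (Fin s) :=
  { x | x ∈ C ∧ D.neighbors x ⊆ C }

/-- `L_2(C) = C \ (L_1(C) ∪ L_3(C))`. -/
def WOGraph.L2 {s : ℕ} (D : WOGraph s) (C : Set (Fin s)) : Set (Fin s) :=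
  C \ (D.L1 C ∪ D.L3 C)

/-- A minimal vertex cover: a vertex cover minimal with respect to inclusion. -/
def WOGraph.IsMinimalVertexCover {s : ℕ} (D : WOGraph s) (C : Set (Fin s)) : Prop :=
  D.IsVertexCover C ∧ ∀ C' ⊆ C, D.IsVertexCover C' → C' = C

/-- A strong vertex cover of `D`: a vertex cover `C` which is a minimal vertex cover,
or else such that for every `x ∈ L_3(C)` there is `(y, x) ∈ E(D)` with
`y ∈ L_2(C) ∪ L_3(C)` and `w(y) ≥ 2`. -/
def WOGraph.IsStrongVertexCover {s : ℕ} (D : WOGraph s) (C : Set (Fin s)) : Prop :=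
  D.IsVertexCover C ∧
    (D.IsMinimalVertexCover C ∨
      ∀ x ∈ D.L3 C, ∃ y, (y, x) ∈ D.E ∧ y ∈ D.L2 C ∪ D.L3 C ∧ 2 ≤ D.w y)

/-- The irreducible ideal `I_C = (L_1(C) ∪ {t_i^{w_i} : t_i ∈ L_2(C) ∪ L_3(C)})`
attached to a strong vertex cover `C`. -/
noncomputable def coverIdeal (K : Type*) [Field K] {s : ℕ} (D : WOGraph s) (C : Set (Fin s)) :
    Ideal (MvPolynomial (Fin s) K) :=
  Ideal.span ((fun x => (X x : MvPolynomial (Fin s) K)) '' D.L1 C ∪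
    (fun x => (X x : MvPolynomial (Fin s) K) ^ D.w x) '' (D.L2 C ∪ D.L3 C))

/-! Both sides are monomial ideals, so it suffices to show that a monomial `t^a` lying in
every `I_C` lies in `I(D)`. If no edge monomial divides `t^a`, then among the vertex covers `C`
with `a = 0` on `L_1(C)` and `a < w` on `C` (the set `{x | a x < w x}` is one), an
inclusion-minimal one is strong: a vertex of `L_3(C)` without an in-neighbour
`y ∈ L_2(C) ∪ L_3(C)` of weight `≥ 2` could be removed from `C`. Such a `C` has
`t^a ∉ I_C`. -/

open Finsupp

namespace WOGraph

variable {s : ℕ} (D : WOGraph s)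

lemma L3_subset_diff_L1 (C : Set (Fin s)) : D.L3 C ⊆ C \ D.L1 C :=
  fun _ ⟨hx, hN⟩ => ⟨hx, fun ⟨_, _, hxy, hy⟩ => hy (hN (Or.inl hxy))⟩

lemma L2_union_L3 (C : Set (Fin s)) : D.L2 C ∪ D.L3 C = C \ D.L1 C := by
  rw [L2, ← Set.sdiff_sdiff, Set.sdiff_union_self, Set.union_eq_left.2 (D.L3_subset_diff_L1 C)]

def edgeExponents : Set (Fin s →₀ ℕ) :=
  (fun e => single e.1 1 + single e.2 (D.w e.2)) '' D.E

def coverExponents (C : Set (Fin s)) : Set (Fin s →₀ ℕ) :=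
  (fun x => single x 1) '' D.L1 C ∪ (fun x => single x (D.w x)) '' (D.L2 C ∪ D.L3 C)

lemma edgeIdeal_eq_span_monomial (K : Type*) [Field K] :
    D.edgeIdeal K = Ideal.span ((fun v => monomial v (1 : K)) '' D.edgeExponents) := by
  rw [edgeIdeal, edgeExponents, Set.image_image]
  congr 1
  ext f
  simp only [Set.mem_ofPred_eq, Set.mem_image, eq_comm (a := f), X_pow_eq_monomial]
  simp only [X, monomial_mul, one_mul]

lemma coverIdeal_eq_span_monomial (K : Type*) [Field K] (C : Set (Fin s)) :
    coverIdeal K D C = Ideal.span ((fun v => monomial v (1 : K)) '' D.coverExponents C) := by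
  simp only [coverIdeal, coverExponents, X_pow_eq_monomial]
  simp only [X, Set.image_union, Set.image_image]

lemma exists_edgeExponents_le_iff (a : Fin s →₀ ℕ) :
    (∃ v ∈ D.edgeExponents, v ≤ a) ↔ ∃ e ∈ D.E, 1 ≤ a e.1 ∧ D.w e.2 ≤ a e.2 := by
  refine Set.exists_mem_image.trans (exists_congr fun e => and_congr_right fun he => ?_)
  have hne : e.1 ≠ e.2 := fun h =>
    D.no_loops e.1 (by rwa [show (e.1, e.1) = e from Prod.ext rfl h])
  constructor
  · intro h
    exact ⟨by simpa [hne] using h e.1, by simpa [hne] using h e.2⟩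
  · rintro ⟨h1, h2⟩ x
    simp only [Finsupp.coe_add, Pi.add_apply, single_apply]
    split_ifs <;> subst_vars <;> simp_all

lemma exists_coverExponents_le_iff (C : Set (Fin s)) (a : Fin s →₀ ℕ) :
    (∃ v ∈ D.coverExponents C, v ≤ a) ↔
      (∃ x ∈ D.L1 C, 1 ≤ a x) ∨ ∃ x ∈ D.L2 C ∪ D.L3 C, D.w x ≤ a x := by
  simp only [coverExponents, Set.mem_union, or_and_right, exists_or, Set.exists_mem_image,
    single_le_iff]

lemma edge_mem_coverIdeal (K : Type*) [Field K] {C : Set (Fin s)} (hC : D.IsVertexCover C)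
    {i j : Fin s} (hij : (i, j) ∈ D.E) :
    (X i * X j ^ D.w j : MvPolynomial (Fin s) K) ∈ coverIdeal K D C := by
  by_cases hj : j ∈ C
  · apply Ideal.mul_mem_left
    by_cases hj1 : j ∈ D.L1 C
    · exact Ideal.mem_of_dvd _ (dvd_pow_self _ (Nat.one_le_iff_ne_zero.1 (D.w_pos j)))
        (Ideal.subset_span (Or.inl ⟨j, hj1, rfl⟩))
    · exact Ideal.subset_span (Or.inr ⟨j, by rw [L2_union_L3]; exact ⟨hj, hj1⟩, rfl⟩)
  · have hi : i ∈ D.L1 C := ⟨(hC _ hij).resolve_right hj, j, hij, hj⟩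
    exact Ideal.mul_mem_right _ _ (Ideal.subset_span (Or.inl ⟨i, hi, rfl⟩))

lemma neighbors_subset_diff_singleton {C : Set (Fin s)} {x : Fin s} (hx : x ∈ D.L3 C) :
    D.neighbors x ⊆ C \ {x} := by
  rintro y hy
  refine ⟨hx.2 hy, fun hyx => ?_⟩
  rw [hyx] at hy
  exact D.no_loops x (hy.elim id id)

/-- The vertex covers `C` with `t^a ∉ I_C`, with `a < w` imposed on all of `C`. -/
def IsCoverAvoiding (a : Fin s →₀ ℕ) (C : Set (Fin s)) : Prop :=
  D.IsVertexCover C ∧ (∀ x ∈ D.L1 C, a x = 0) ∧ ∀ x ∈ C, a x < D.w x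

variable {D}

lemma isCoverAvoiding_setOf_lt {a : Fin s →₀ ℕ}
    (h : ∀ e ∈ D.E, a e.1 = 0 ∨ a e.2 < D.w e.2) :
    D.IsCoverAvoiding a {x | a x < D.w x} := by
  refine ⟨fun e he => ?_, fun x ⟨_, y, hxy, hy⟩ => (h _ hxy).resolve_right hy, fun _ => id⟩
  rcases h e he with h0 | hlt
  · exact Or.inl (show a e.1 < D.w e.1 from h0 ▸ D.w_pos e.1)
  · exact Or.inr hlt

lemma IsCoverAvoiding.diff_singleton {a : Fin s →₀ ℕ} {C : Set (Fin s)} {x : Fin s}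
    (hC : D.IsCoverAvoiding a C) (hx : x ∈ D.L3 C)
    (hno : ∀ y, (y, x) ∈ D.E → y ∈ D.L2 C ∪ D.L3 C → D.w y < 2) :
    D.IsCoverAvoiding a (C \ {x}) := by
  refine ⟨?_, ?_, fun y hy => hC.2.2 y hy.1⟩
  · rintro ⟨i, j⟩ hij
    rcases hC.1 _ hij with hi | hj
    · obtain rfl | hix := eq_or_ne i x
      · exact Or.inr (D.neighbors_subset_diff_singleton hx (Or.inl hij))
      · exact Or.inl ⟨hi, hix⟩
    · obtain rfl | hjx := eq_or_ne j x
      · exact Or.inl (D.neighbors_subset_diff_singleton hx (Or.inr hij))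
      · exact Or.inr ⟨hj, hjx⟩
  · rintro i ⟨⟨hiC, -⟩, j, hij, hj⟩
    by_cases hi : i ∈ D.L1 C
    · exact hC.2.1 i hi
    have hjC : j ∈ C := by_contra fun hjC => hi ⟨hiC, j, hij, hjC⟩
    obtain rfl : j = x := by simpa [hjC] using hj
    have hw := hno i hij (by rw [L2_union_L3]; exact ⟨hiC, hi⟩)
    have ha := hC.2.2 i hiC
    omega

lemma exists_isStrongVertexCover_isCoverAvoiding {a : Fin s →₀ ℕ}
    (h : ∀ e ∈ D.E, a e.1 = 0 ∨ a e.2 < D.w e.2) :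
    ∃ C, D.IsStrongVertexCover C ∧ D.IsCoverAvoiding a C := by
  obtain ⟨C, hC, hmin⟩ :=
    exists_minimal_of_wellFoundedLT (D.IsCoverAvoiding a) ⟨_, isCoverAvoiding_setOf_lt h⟩
  refine ⟨C, ⟨hC.1, Or.inr fun x hx => ?_⟩, hC⟩
  by_contra! hno
  exact (hmin (hC.diff_singleton hx hno) Set.sdiff_subset hx.1).2 rfl

lemma IsCoverAvoiding.not_exists_coverExponents_le {a : Fin s →₀ ℕ} {C : Set (Fin s)}
    (hC : D.IsCoverAvoiding a C) : ¬ ∃ v ∈ D.coverExponents C, v ≤ a := by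
  rw [exists_coverExponents_le_iff]
  rintro (⟨x, hx, h1⟩ | ⟨x, hx, hw⟩)
  · have := hC.2.1 x hx
    omega
  · have := hC.2.2 x (by rw [L2_union_L3] at hx; exact hx.1)
    omega

end WOGraph

/-- **Theorem (irreducible decomposition of `I(D)`).** For a weighted oriented graph `D`,
`I(D) = ⋂_{C ∈ Υ(D)} I_C`, the intersection being taken over all strong vertex covers
`C` of `D`. -/
theorem edgeIdeal_eq_iInf_coverIdeal {s : ℕ} (K : Type*) [Field K] (D : WOGraph s) :
    D.edgeIdeal K =
      ⨅ (C : Set (Fin s)) (_ : D.IsStrongVertexCover C), coverIdeal K D C := by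
  refine le_antisymm (le_iInf₂ fun C hC => ?_) fun f hf => ?_
  · rw [WOGraph.edgeIdeal, Ideal.span_le]
    rintro _ ⟨⟨i, j⟩, hij, rfl⟩
    exact D.edge_mem_coverIdeal K hC.1 hij
  · rw [D.edgeIdeal_eq_span_monomial, mem_ideal_span_monomial_image]
    intro a ha
    rw [D.exists_edgeExponents_le_iff]
    by_contra! h
    obtain ⟨C, hC, hCa⟩ := WOGraph.exists_isStrongVertexCover_isCoverAvoiding
      fun e he => (Nat.eq_zero_or_pos _).imp_right (h e he)
    have hfC := Ideal.mem_iInf.1 (Ideal.mem_iInf.1 hf C) hC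
    rw [D.coverIdeal_eq_span_monomial, mem_ideal_span_monomial_image] at hfC
    exact hCa.not_exists_coverExponents_le (hfC a ha)
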